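/- With μ, g, α, β, U = [η₁, …, ηₙ], r = rank(G₀), and Λ(s) = diag(λ₁(s), …, λₙ(s)) defined as follows: μ = 1 if rank(G₀) = m = n, μ = √2 if rank(G₀) = min(m, n) and m ≠ n, μ = (1 + √5)/2 if rank(G₀) < min(m, n); g(s) = σ − (L_f + L_G)s, α(s) = σ − L_G·s, β(s) = μ·σ⁻¹·L_G·s; λᵢ(s) = max{ g(s)/(α(s)‖G₀†ηᵢ‖ + β(s)), g(s), 0 } for i ≤ r and λᵢ(s) = 0 for i > r. Let T ≥ 0 and let φ : [0, T] → ℝⁿ be differentiable with φ(0) = 0, (L_f + L_G)·‖φ(t)‖ ≤ σ for all t, and φ′(t) = f₀ + U·Λ(‖φ(t)‖)·q(t) for some q : [0, T] → ℝⁿ with ‖q(t)‖₁ ≤ 1 for all t. Then for every consistent pair (f̂, Ĝ) there exists u : [0, T] → ℝᵐ with ‖u(t)‖ ≤ 1 for all t such that φ′(t) = f̂(φ(t)) + Ĝ(φ(t))·u(t) for every t ∈ [0, T]. -/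

import Mathlib

open Matrix Set

noncomputable def matOpNorm {n m : ℕ} (M : Matrix (Fin n) (Fin m) ℝ) : ℝ :=
  ‖LinearMap.toContinuousLinearMap (Matrix.toEuclideanLin M)‖

noncomputable def appMat {n m : ℕ} (M : Matrix (Fin n) (Fin m) ℝ)
    (v : EuclideanSpace ℝ (Fin m)) : EuclideanSpace ℝ (Fin n) :=
  Matrix.toEuclideanLin M v

noncomputable def colSpace {n m : ℕ} (M : Matrix (Fin n) (Fin m) ℝ) :
    Submodule ℝ (EuclideanSpace ℝ (Fin n)) :=
  LinearMap.range (Matrix.toEuclideanLin M)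

noncomputable def minSV {n m : ℕ} (M : Matrix (Fin n) (Fin m) ℝ) : ℝ :=
  Real.sqrt (sInf {μ : ℝ | μ ≠ 0 ∧
    ∃ i, (show (Mᵀ * M).IsHermitian by
      have h := Matrix.isHermitian_conjTranspose_mul_self M
      rwa [Matrix.conjTranspose_eq_transpose_of_trivial] at h).eigenvalues i = μ})

/-- A pair `(fh, Gh)` consistent with the prior knowledge of the dynamics. -/
structure Consistent {n m : ℕ} (R : Matrix (Fin n) (Fin m) ℝ) (Lf LG : ℝ)
    (f₀ : EuclideanSpace ℝ (Fin n)) (G₀ : Matrix (Fin n) (Fin m) ℝ)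
    (fh : EuclideanSpace ℝ (Fin n) → EuclideanSpace ℝ (Fin n))
    (Gh : EuclideanSpace ℝ (Fin n) → Matrix (Fin n) (Fin m) ℝ) : Prop where
  lipf : ∀ y z, ‖fh y - fh z‖ ≤ Lf * ‖y - z‖
  lipG : ∀ y z, matOpNorm (Gh y - Gh z) ≤ LG * ‖y - z‖
  f_zero : fh 0 = f₀
  G_zero : Gh 0 = G₀
  f_im : ∀ y, fh y ∈ colSpace R
  factor : ∃ Hh : EuclideanSpace ℝ (Fin n) → Matrix (Fin m) (Fin m) ℝ,
    IsUnit (Hh 0) ∧ ∀ y, Gh y = R * Hh y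

/-- The guaranteed velocity set at `x`. -/
noncomputable def GVS {n m : ℕ} (R : Matrix (Fin n) (Fin m) ℝ) (Lf LG : ℝ)
    (f₀ : EuclideanSpace ℝ (Fin n)) (G₀ : Matrix (Fin n) (Fin m) ℝ)
    (x : EuclideanSpace ℝ (Fin n)) : Set (EuclideanSpace ℝ (Fin n)) :=
  ⋂ (fh : EuclideanSpace ℝ (Fin n) → EuclideanSpace ℝ (Fin n))
    (Gh : EuclideanSpace ℝ (Fin n) → Matrix (Fin n) (Fin m) ℝ)
    (_ : Consistent R Lf LG f₀ G₀ fh Gh),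
      {w | ∃ u : EuclideanSpace ℝ (Fin m), ‖u‖ ≤ 1 ∧ w = fh x + appMat (Gh x) u}

/-!
At a state `x` with `s = ‖x‖`, the polytope velocity `f₀ + U Λ(s) q` equals `f₀ + G₀ v` with
`v = ∑ λᵢ(s) qᵢ wᵢ`, and `λᵢ` is chosen exactly so that `σ ‖v‖ ≤ g(s)` (using `σ ‖wᵢ‖ ≤ 1`).
For a consistent pair, `f₀ - f̂(x) = G₀ v₀` with `σ ‖v₀‖ ≤ L_f s`, and `Ĝ(x)` differs from `G₀`
by at most `L_G s < σ` in operator norm while having the same column space. So `Ĝ(x)` is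
injective on `(ker G₀)ᗮ`, whose dimension is `rank G₀`, and solving `Ĝ(x) u = G₀ (v₀ + v)` there
gives
`(σ - L_G s) ‖u‖ ≤ σ ‖v₀ + v‖ ≤ L_f s + g(s) = σ - L_G s`, i.e. `‖u‖ ≤ 1`.
-/

open LinearMap
open scoped RealInnerProductSpace

namespace LinearMap

variable {E F : Type*} [NormedAddCommGroup E] [InnerProductSpace ℝ E] [FiniteDimensional ℝ E]
  [NormedAddCommGroup F] [Module ℝ F]

theorem apply_starProjection_orthogonal_ker (L : E →ₗ[ℝ] F) (v : E) :
    L ((ker L)ᗮ.starProjection v) = L v := by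
  have hK : L ((ker L).starProjection v) = 0 := (ker L).starProjection_apply_mem v
  have := congrArg L ((ker L).starProjection_add_starProjection_orthogonal v)
  rwa [map_add, hK, zero_add] at this

theorem exists_preimage_mul_norm_le {L : E →ₗ[ℝ] F} {c : ℝ}
    (hL : ∀ v ∈ (ker L)ᗮ, c * ‖v‖ ≤ ‖L v‖) {d : F} (hd : d ∈ range L) :
    ∃ v, L v = d ∧ c * ‖v‖ ≤ ‖d‖ := by
  obtain ⟨v, rfl⟩ := hd
  refine ⟨_, L.apply_starProjection_orthogonal_ker v, ?_⟩
  rw [← L.apply_starProjection_orthogonal_ker v]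
  exact hL _ ((ker L)ᗮ.starProjection_apply_mem v)

theorem exists_apply_eq_of_perturbation {L L' : E →ₗ[ℝ] F} {c δ : ℝ} (hc : 0 ≤ c) (hδc : δ < c)
    (hL : ∀ v ∈ (ker L)ᗮ, c * ‖v‖ ≤ ‖L v‖) (hL' : ∀ u, ‖L' u - L u‖ ≤ δ * ‖u‖)
    (hrange : range L' ≤ range L) (v : E) :
    ∃ u, L' u = L v ∧ (c - δ) * ‖u‖ ≤ c * ‖v‖ := by
  set K := (ker L)ᗮ
  have bound : ∀ u ∈ K, ∀ v' ∈ K, L' u = L v' → (c - δ) * ‖u‖ ≤ c * ‖v'‖ := by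
    intro u hu v' hv' huv
    have h1 : c * ‖u - v'‖ ≤ δ * ‖u‖ := by
      calc c * ‖u - v'‖ ≤ ‖L (u - v')‖ := hL _ (K.sub_mem hu hv')
        _ = ‖L' u - L u‖ := by rw [map_sub, ← huv, norm_sub_rev]
        _ ≤ δ * ‖u‖ := hL' u
    have h2 : c * ‖u‖ ≤ c * ‖u - v'‖ + c * ‖v'‖ := by
      rw [← mul_add]
      exact mul_le_mul_of_nonneg_left (norm_le_norm_sub_add u v') hc
    linarith
  let A : K →ₗ[ℝ] range L := (L'.domRestrict K).codRestrict (range L) fun u => hrange ⟨u, rfl⟩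
  have hinj : Function.Injective A := by
    refine (injective_iff_map_eq_zero A).mpr fun u hu => ?_
    have h := bound u u.2 0 K.zero_mem (by simpa [A] using congrArg Subtype.val hu)
    rw [norm_zero, mul_zero] at h
    have : ‖(u : E)‖ = 0 := by nlinarith [norm_nonneg (u : E)]
    exact Subtype.ext (norm_eq_zero.mp this)
  have hdim : Module.finrank ℝ (ker L)ᗮ = Module.finrank ℝ (range L) := by
    have h1 : _ = Module.finrank ℝ E := (ker L).finrank_add_finrank_orthogonal
    have h2 : _ = Module.finrank ℝ E := L.finrank_range_add_finrank_ker
    omega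
  obtain ⟨u, hu⟩ := (injective_iff_surjective_of_finrank_eq_finrank hdim).mp hinj
    ⟨L (K.starProjection v), mem_range_self L _⟩
  have hu' : L' u = L (K.starProjection v) := congrArg Subtype.val hu
  refine ⟨u, hu'.trans (L.apply_starProjection_orthogonal_ker v), ?_⟩
  calc (c - δ) * ‖(u : E)‖ ≤ c * ‖K.starProjection v‖ :=
        bound u u.2 _ (K.starProjection_apply_mem v) hu'
    _ ≤ c * ‖v‖ := mul_le_mul_of_nonneg_left (K.norm_starProjection_apply_le v) hc

end LinearMap

namespace Matrix

variable {n m : ℕ}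

theorem isHermitian_transpose_mul_self (G : Matrix (Fin n) (Fin m) ℝ) : (Gᵀ * G).IsHermitian := by
  simpa only [conjTranspose_eq_transpose_of_trivial] using isHermitian_conjTranspose_mul_self G

theorem inner_toEuclideanLin_transpose_mul_self (G : Matrix (Fin n) (Fin m) ℝ)
    (v : EuclideanSpace ℝ (Fin m)) :
    ⟪v, toEuclideanLin (Gᵀ * G) v⟫ = ‖toEuclideanLin G v‖ ^ 2 := by
  rw [toLpLin_mul_same, ← conjTranspose_eq_transpose_of_trivial,
    toEuclideanLin_conjTranspose_eq_adjoint, LinearMap.comp_apply, adjoint_inner_right,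
    real_inner_self_eq_norm_sq]

theorem toEuclideanLin_mul_diagonal_apply {U : Matrix (Fin n) (Fin n) ℝ}
    {η : Fin n → EuclideanSpace ℝ (Fin n)} (hη : ∀ i j, η i j = U j i) (a : Fin n → ℝ)
    (q : EuclideanSpace ℝ (Fin n)) :
    toEuclideanLin U (toEuclideanLin (diagonal a) q) = ∑ i, (a i * q i) • η i := by
  ext j
  simp [toLpLin_apply, mulVec, dotProduct, hη, mul_comm, mul_assoc]

theorem norm_col_eq_one {U : Matrix (Fin n) (Fin n) ℝ} (hU : Uᵀ * U = 1)
    {η : Fin n → EuclideanSpace ℝ (Fin n)} (hη : ∀ i j, η i j = U j i) (i : Fin n) :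
    ‖η i‖ = 1 := by
  have h : ‖η i‖ ^ 2 = 1 := by
    simpa [EuclideanSpace.norm_sq_eq, hη, mul_apply, ← sq] using congrFun (congrFun hU i) i
  exact (pow_eq_one_iff_of_nonneg (norm_nonneg _) two_ne_zero).mp h

end Matrix

section SingularValues

variable {n m : ℕ}

theorem colSpace_transpose (G : Matrix (Fin n) (Fin m) ℝ) :
    colSpace Gᵀ = (ker (toEuclideanLin G))ᗮ := by
  rw [orthogonal_ker, ← toEuclideanLin_conjTranspose_eq_adjoint,
    conjTranspose_eq_transpose_of_trivial]
  rfl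

theorem colSpace_mul_of_isUnit (R : Matrix (Fin n) (Fin m) ℝ) {H : Matrix (Fin m) (Fin m) ℝ}
    (hH : IsUnit H) : colSpace (R * H) = colSpace R := by
  have hsurj : LinearMap.range (toEuclideanLin H) = ⊤ := by
    refine range_eq_top.mpr fun v => ⟨toEuclideanLin H⁻¹ v, ?_⟩
    rw [← LinearMap.comp_apply, ← toLpLin_mul_same,
      mul_nonsing_inv H ((isUnit_iff_isUnit_det H).mp hH)]
    simp
  rw [colSpace, toLpLin_mul_same, range_comp_of_range_eq_top _ hsurj]
  rfl

theorem sq_minSV_le_eigenvalue {G : Matrix (Fin n) (Fin m) ℝ} {i : Fin m}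
    (hi : (isHermitian_transpose_mul_self G).eigenvalues i ≠ 0) :
    minSV G ^ 2 ≤ (isHermitian_transpose_mul_self G).eigenvalues i := by
  have hfin : {μ : ℝ | μ ≠ 0 ∧ ∃ j, (isHermitian_transpose_mul_self G).eigenvalues j = μ}.Finite :=
    (Set.finite_range _).subset fun μ hμ => hμ.2
  calc minSV G ^ 2 ≤ √((isHermitian_transpose_mul_self G).eigenvalues i) ^ 2 :=
        pow_le_pow_left₀ (Real.sqrt_nonneg _)
          (Real.sqrt_le_sqrt (csInf_le hfin.bddBelow ⟨hi, i, rfl⟩)) 2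
    _ = _ := Real.sq_sqrt (eigenvalues_conjTranspose_mul_self_nonneg G i)

theorem minSV_pos {G : Matrix (Fin n) (Fin m) ℝ} (hG : G ≠ 0) : 0 < minSV G := by
  set S := {μ : ℝ | μ ≠ 0 ∧ ∃ j, (isHermitian_transpose_mul_self G).eigenvalues j = μ}
  have hne : S.Nonempty := by
    have : (isHermitian_transpose_mul_self G).eigenvalues ≠ 0 := by
      rwa [Ne, IsHermitian.eigenvalues_eq_zero_iff, ← conjTranspose_eq_transpose_of_trivial,
        conjTranspose_mul_self_eq_zero]
    obtain ⟨i, hi⟩ := Function.ne_iff.mp this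
    exact ⟨_, hi, i, rfl⟩
  obtain ⟨hS0, i, hi⟩ := hne.csInf_mem ((Set.finite_range _).subset fun μ hμ => hμ.2)
  refine Real.sqrt_pos.mpr (lt_of_le_of_ne ?_ (Ne.symm hS0))
  exact hi ▸ eigenvalues_conjTranspose_mul_self_nonneg G i

theorem minSV_mul_norm_le {G : Matrix (Fin n) (Fin m) ℝ} {v : EuclideanSpace ℝ (Fin m)}
    (hv : v ∈ (ker (toEuclideanLin G))ᗮ) :
    minSV G * ‖v‖ ≤ ‖toEuclideanLin G v‖ := by
  set hH := isHermitian_transpose_mul_self G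
  set b := hH.eigenvectorBasis
  set T := toEuclideanLin (Gᵀ * G)
  have hTb : ∀ i, T (b i) = hH.eigenvalues i • b i := fun i => by
    ext j
    simpa [T, toLpLin_apply] using congrFun (hH.mulVec_eigenvectorBasis i) j
  have hcoef : ∀ i, ⟪b i, T v⟫ = hH.eigenvalues i * ⟪b i, v⟫ := fun i => by
    rw [← (isSymmetric_toEuclideanLin_iff.mpr hH) (b i) v, hTb, real_inner_smul_left]
  -- eigenvectors with eigenvalue zero lie in `ker G`, to which `v` is orthogonal
  have hker : ∀ i, hH.eigenvalues i = 0 → ⟪v, b i⟫ = 0 := fun i hi => by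
    refine (Submodule.mem_orthogonal' _ v).mp hv _ ?_
    rw [mem_ker, ← norm_eq_zero, ← pow_eq_zero_iff two_ne_zero,
      ← inner_toEuclideanLin_transpose_mul_self, hTb, hi, zero_smul, inner_zero_right]
  have hsq : (minSV G * ‖v‖) ^ 2 ≤ ‖toEuclideanLin G v‖ ^ 2 := by
    rw [← inner_toEuclideanLin_transpose_mul_self, mul_pow, ← real_inner_self_eq_norm_sq,
      ← b.sum_inner_mul_inner v v, ← b.sum_inner_mul_inner v (T v), Finset.mul_sum]
    refine Finset.sum_le_sum fun i _ => ?_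
    rw [hcoef, real_inner_comm v]
    by_cases hi : hH.eigenvalues i = 0
    · simp [hker i hi]
    · have := sq_minSV_le_eigenvalue hi
      nlinarith [mul_self_nonneg ⟪b i, v⟫]
  exact (pow_le_pow_iff_left₀ (mul_nonneg (Real.sqrt_nonneg _) (norm_nonneg v))
    (norm_nonneg _) two_ne_zero).mp hsq

theorem minSV_mul_norm_le_one {G : Matrix (Fin n) (Fin m) ℝ} {w : EuclideanSpace ℝ (Fin m)}
    {η : EuclideanSpace ℝ (Fin n)} (hw : w ∈ colSpace Gᵀ) (hGw : appMat G w = η)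
    (hη : ‖η‖ = 1) : minSV G * ‖w‖ ≤ 1 :=
  calc minSV G * ‖w‖ ≤ ‖appMat G w‖ := minSV_mul_norm_le (colSpace_transpose G ▸ hw)
    _ = 1 := by rw [hGw, hη]

theorem exists_preimage_of_columns_norm_le {G₀ : Matrix (Fin n) (Fin m) ℝ}
    {U : Matrix (Fin n) (Fin n) ℝ} {η : Fin n → EuclideanSpace ℝ (Fin n)}
    (hη : ∀ i j, η i j = U j i) {w : Fin n → EuclideanSpace ℝ (Fin m)} {a : Fin n → ℝ}
    (hw : ∀ i, a i ≠ 0 → appMat G₀ (w i) = η i) {γ : ℝ}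
    (ha : ∀ i, minSV G₀ * (|a i| * ‖w i‖) ≤ γ) (hγ : 0 ≤ γ)
    {q : EuclideanSpace ℝ (Fin n)} (hq : ∑ i, |q i| ≤ 1) :
    ∃ v, appMat G₀ v = appMat U (appMat (diagonal a) q) ∧ minSV G₀ * ‖v‖ ≤ γ := by
  refine ⟨∑ i, (a i * q i) • w i, ?_, ?_⟩
  · rw [appMat, appMat, appMat, toEuclideanLin_mul_diagonal_apply hη, map_sum]
    refine Finset.sum_congr rfl fun i _ => ?_
    by_cases hai : a i = 0
    · simp [hai]
    · rw [map_smul]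
      exact congrArg _ (hw i hai)
  · calc minSV G₀ * ‖∑ i, (a i * q i) • w i‖
          ≤ minSV G₀ * ∑ i, ‖(a i * q i) • w i‖ :=
          mul_le_mul_of_nonneg_left (norm_sum_le _ _) (Real.sqrt_nonneg _)
      _ = ∑ i, |q i| * (minSV G₀ * (|a i| * ‖w i‖)) := by
          rw [Finset.mul_sum]
          refine Finset.sum_congr rfl fun i _ => ?_
          rw [norm_smul, Real.norm_eq_abs, abs_mul]
          ring
      _ ≤ ∑ i, |q i| * γ := by gcongr with i; exact ha i
      _ = (∑ i, |q i|) * γ := (Finset.sum_mul _ _ _).symm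
      _ ≤ γ := mul_le_of_le_one_left hγ hq

end SingularValues

theorem mul_max_div_mul_le {σ ℓ μ γ W : ℝ} (hσ : 0 < σ) (hμ : 1 ≤ μ) (hℓ : 0 ≤ ℓ) (hγ : 0 ≤ γ)
    (hW : 0 ≤ W) (hσW : σ * W ≤ 1) :
    σ * (max (max (γ / ((σ - ℓ) * W + μ * σ⁻¹ * ℓ)) γ) 0 * W) ≤ γ := by
  have hWσ : W ≤ μ * σ⁻¹ := calc
    W = σ⁻¹ * (σ * W) := by field_simp
    _ ≤ σ⁻¹ * 1 := by gcongr
    _ ≤ μ * σ⁻¹ := by rw [mul_one]; exact le_mul_of_one_le_left (by positivity) hμ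
  have hden : σ * W ≤ (σ - ℓ) * W + μ * σ⁻¹ * ℓ := by nlinarith
  rw [max_mul_of_nonneg _ _ hW, max_mul_of_nonneg _ _ hW, mul_max_of_nonneg _ _ hσ.le,
    mul_max_of_nonneg _ _ hσ.le, zero_mul, mul_zero]
  refine max_le (max_le ?_ ?_) hγ
  · calc σ * (γ / ((σ - ℓ) * W + μ * σ⁻¹ * ℓ) * W)
          = γ * (σ * W / ((σ - ℓ) * W + μ * σ⁻¹ * ℓ)) := by ring
      _ ≤ γ * 1 := by
          gcongr
          exact div_le_one_of_le₀ hden ((mul_nonneg hσ.le hW).trans hden)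
      _ = γ := mul_one γ
  · nlinarith

namespace Consistent

variable {n m : ℕ} {R : Matrix (Fin n) (Fin m) ℝ} {Lf LG : ℝ} {f₀ : EuclideanSpace ℝ (Fin n)}
  {G₀ : Matrix (Fin n) (Fin m) ℝ} {fh : EuclideanSpace ℝ (Fin n) → EuclideanSpace ℝ (Fin n)}
  {Gh : EuclideanSpace ℝ (Fin n) → Matrix (Fin n) (Fin m) ℝ}

theorem norm_sub_le (hc : Consistent R Lf LG f₀ G₀ fh Gh) (x : EuclideanSpace ℝ (Fin n)) :
    ‖f₀ - fh x‖ ≤ Lf * ‖x‖ := by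
  simpa [hc.f_zero] using hc.lipf 0 x

theorem norm_apply_sub_le (hc : Consistent R Lf LG f₀ G₀ fh Gh) (x : EuclideanSpace ℝ (Fin n))
    (u : EuclideanSpace ℝ (Fin m)) :
    ‖toEuclideanLin (Gh x) u - toEuclideanLin G₀ u‖ ≤ LG * ‖x‖ * ‖u‖ := by
  rw [← LinearMap.sub_apply, ← map_sub]
  calc _ ≤ matOpNorm (Gh x - G₀) * ‖u‖ := (LinearMap.toContinuousLinearMap _).le_opNorm u
    _ ≤ LG * ‖x‖ * ‖u‖ := by
        gcongr
        simpa [hc.G_zero] using hc.lipG x 0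

theorem colSpace_le (hc : Consistent R Lf LG f₀ G₀ fh Gh) (x : EuclideanSpace ℝ (Fin n)) :
    colSpace (Gh x) ≤ colSpace R := by
  obtain ⟨Hh, -, hHh⟩ := hc.factor
  rw [colSpace, hHh x, toLpLin_mul_same]
  exact LinearMap.range_comp_le_range _ _

theorem exists_control (hc : Consistent R Lf LG f₀ G₀ fh Gh) (hLf : 0 < Lf)
    (hf₀ : f₀ ∈ colSpace R) (hG₀R : colSpace G₀ = colSpace R) (hG₀ : G₀ ≠ 0)
    {x : EuclideanSpace ℝ (Fin n)} {v : EuclideanSpace ℝ (Fin m)}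
    (hv : minSV G₀ * ‖v‖ ≤ minSV G₀ - (Lf + LG) * ‖x‖) :
    ∃ u, ‖u‖ ≤ 1 ∧ f₀ + appMat G₀ v = fh x + appMat (Gh x) u := by
  have hσ := minSV_pos hG₀
  have hLG : LG * ‖x‖ < minSV G₀ := by
    rcases (norm_nonneg x).eq_or_lt with hx | hx
    · rwa [← hx, mul_zero]
    · nlinarith [mul_nonneg hσ.le (norm_nonneg v), mul_pos hLf hx]
  have hL : ∀ v ∈ (ker (toEuclideanLin G₀))ᗮ, minSV G₀ * ‖v‖ ≤ ‖toEuclideanLin G₀ v‖ :=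
    fun _ => minSV_mul_norm_le
  obtain ⟨v₀, hv₀, hv₀n⟩ := (toEuclideanLin G₀).exists_preimage_mul_norm_le hL
    (hG₀R.symm ▸ sub_mem hf₀ (hc.f_im x) : f₀ - fh x ∈ colSpace G₀)
  obtain ⟨u, hu, hun⟩ := LinearMap.exists_apply_eq_of_perturbation hσ.le hLG hL
    (hc.norm_apply_sub_le x) (hG₀R.symm ▸ hc.colSpace_le x : colSpace (Gh x) ≤ colSpace G₀)
    (v₀ + v)
  refine ⟨u, ?_, ?_⟩
  · have hu1 : (minSV G₀ - LG * ‖x‖) * ‖u‖ ≤ (minSV G₀ - LG * ‖x‖) * 1 := calc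
      _ ≤ minSV G₀ * ‖v₀ + v‖ := hun
      _ ≤ minSV G₀ * ‖v₀‖ + minSV G₀ * ‖v‖ := by
          rw [← mul_add]
          exact mul_le_mul_of_nonneg_left (norm_add_le v₀ v) hσ.le
      _ ≤ Lf * ‖x‖ + (minSV G₀ - (Lf + LG) * ‖x‖) :=
          add_le_add (hv₀n.trans (hc.norm_sub_le x)) hv
      _ = _ := by ring
    exact le_of_mul_le_mul_left hu1 (by linarith)
  · change f₀ + toEuclideanLin G₀ v = fh x + toEuclideanLin (Gh x) u
    rw [hu, map_add, hv₀]
    abel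

end Consistent

theorem theorem4_polytope_trajectory_general {n m : ℕ} (R : Matrix (Fin n) (Fin m) ℝ)
    (Lf LG : ℝ) (hLf : 0 < Lf) (hLG : 0 < LG)
    (f₀ : EuclideanSpace ℝ (Fin n)) (hf₀ : f₀ ∈ colSpace R)
    (H₀ : Matrix (Fin m) (Fin m) ℝ) (hH₀ : IsUnit H₀)
    (G₀ : Matrix (Fin n) (Fin m) ℝ) (hG₀fac : G₀ = R * H₀) (hG₀ : G₀ ≠ 0)
    (μ : ℝ)
    (hμ : μ = if G₀.rank = m ∧ m = n then 1
      else if G₀.rank = min m n then Real.sqrt 2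
      else (1 + Real.sqrt 5) / 2)
    (g α β : ℝ → ℝ)
    (hg : ∀ s, g s = minSV G₀ - (Lf + LG) * s)
    (hα : ∀ s, α s = minSV G₀ - LG * s)
    (hβ : ∀ s, β s = μ * (minSV G₀)⁻¹ * (LG * s))
    (U : Matrix (Fin n) (Fin n) ℝ) (hU : Uᵀ * U = 1)
    -- the columns `ηᵢ` of `U` and the minimal-norm solutions `w i` of `G₀ w = ηᵢ`
    (η : Fin n → EuclideanSpace ℝ (Fin n)) (hη : ∀ i j, η i j = U j i)
    (w : Fin n → EuclideanSpace ℝ (Fin m))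
    (hw : ∀ i : Fin n, (i : ℕ) < G₀.rank →
      w i ∈ colSpace G₀ᵀ ∧ appMat G₀ (w i) = η i)
    (lam : Fin n → ℝ → ℝ)
    (hlam : ∀ (i : Fin n) (s : ℝ), lam i s =
      if (i : ℕ) < G₀.rank then
        max (max (g s / (α s * ‖w i‖ + β s)) (g s)) 0
      else 0)
    (T : ℝ)
    (φ φ' : ℝ → EuclideanSpace ℝ (Fin n))
    (hstay : ∀ t ∈ Set.Icc (0 : ℝ) T, (Lf + LG) * ‖φ t‖ ≤ minSV G₀)
    (q : ℝ → EuclideanSpace ℝ (Fin n))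
    (hq : ∀ t ∈ Set.Icc (0 : ℝ) T, (∑ i, |q t i|) ≤ 1)
    (hform : ∀ t ∈ Set.Icc (0 : ℝ) T, φ' t =
      f₀ + appMat U (appMat (Matrix.diagonal fun i => lam i ‖φ t‖) (q t))) :
    ∀ fh Gh, Consistent R Lf LG f₀ G₀ fh Gh →
      ∃ u : ℝ → EuclideanSpace ℝ (Fin m),
        ∀ t ∈ Set.Icc (0 : ℝ) T,
          ‖u t‖ ≤ 1 ∧ φ' t = fh (φ t) + appMat (Gh (φ t)) (u t) := by
  intro fh Gh hc
  have hμ1 : 1 ≤ μ := by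
    rw [hμ]
    split_ifs
    · exact le_rfl
    · exact Real.one_le_sqrt.mpr one_le_two
    · exact Real.one_lt_goldenRatio.le
  have hlam_rank : ∀ i s, lam i s ≠ 0 → (i : ℕ) < G₀.rank := fun i s h => by
    by_contra hi
    exact h (by rw [hlam, if_neg hi])
  have key : ∀ t ∈ Set.Icc (0 : ℝ) T,
      ∃ u, ‖u‖ ≤ 1 ∧ φ' t = fh (φ t) + appMat (Gh (φ t)) u := by
    intro t ht
    set s := ‖φ t‖
    have hgs : 0 ≤ g s := by rw [hg]; linarith [hstay t ht]
    have hlam_le : ∀ i, minSV G₀ * (|lam i s| * ‖w i‖) ≤ g s := fun i => by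
      rw [hlam]
      split_ifs with hi
      · rw [abs_of_nonneg (le_max_right _ _), hα, hβ]
        exact mul_max_div_mul_le (minSV_pos hG₀) hμ1 (by positivity) hgs (norm_nonneg _)
          (minSV_mul_norm_le_one (hw i hi).1 (hw i hi).2 (norm_col_eq_one hU hη i))
      · simpa using hgs
    obtain ⟨v, hGv, hv⟩ := exists_preimage_of_columns_norm_le hη
      (fun i hi => (hw i (hlam_rank i s hi)).2) hlam_le hgs (hq t ht)
    rw [hform t ht, ← hGv]
    exact hc.exists_control hLf hf₀ (hG₀fac ▸ colSpace_mul_of_isUnit R hH₀) hG₀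
      (hv.trans_eq (hg s))
  choose! u hu using key
  exact ⟨u, hu⟩

/-- **Theorem 4, trajectory part.** Every trajectory of the polytope
system `ẋ = f₀ + U Λ(‖x‖) q`, `‖q‖₁ ≤ 1`, staying in the region
`(L_f + L_G)‖x‖ ≤ σ`, is a trajectory of every system consistent with the prior
knowledge, realized by admissible controls. -/
theorem theorem4_polytope_trajectory {n m : ℕ} (R : Matrix (Fin n) (Fin m) ℝ)
    (Lf LG : ℝ) (hLf : 0 < Lf) (hLG : 0 < LG)
    (f₀ : EuclideanSpace ℝ (Fin n)) (hf₀ : f₀ ∈ colSpace R)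
    (H₀ : Matrix (Fin m) (Fin m) ℝ) (hH₀ : IsUnit H₀)
    (G₀ : Matrix (Fin n) (Fin m) ℝ) (hG₀fac : G₀ = R * H₀) (hG₀ : G₀ ≠ 0)
    (μ : ℝ)
    (hμ : μ = if G₀.rank = m ∧ m = n then 1
      else if G₀.rank = min m n then Real.sqrt 2
      else (1 + Real.sqrt 5) / 2)
    (g α β : ℝ → ℝ)
    (hg : ∀ s, g s = minSV G₀ - (Lf + LG) * s)
    (hα : ∀ s, α s = minSV G₀ - LG * s)
    (hβ : ∀ s, β s = μ * (minSV G₀)⁻¹ * (LG * s))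
    -- a singular value decomposition `G₀ = U * S * Vᵀ`
    (U : Matrix (Fin n) (Fin n) ℝ) (hU : Uᵀ * U = 1)
    (V : Matrix (Fin m) (Fin m) ℝ) (hV : Vᵀ * V = 1)
    (S : Matrix (Fin n) (Fin m) ℝ) (hSVD : G₀ = U * S * Vᵀ)
    (hSdiag : ∀ (i : Fin n) (j : Fin m), (i : ℕ) ≠ (j : ℕ) → S i j = 0)
    (hSnonneg : ∀ (i : Fin n) (j : Fin m), 0 ≤ S i j)
    (hSmono : ∀ (i i' : Fin n) (j j' : Fin m), (i : ℕ) = (j : ℕ) →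
      (i' : ℕ) = (j' : ℕ) → (i : ℕ) ≤ (i' : ℕ) → S i' j' ≤ S i j)
    -- the columns `ηᵢ` of `U` and the minimal-norm solutions `w i` of `G₀ w = ηᵢ`
    (η : Fin n → EuclideanSpace ℝ (Fin n)) (hη : ∀ i j, η i j = U j i)
    (w : Fin n → EuclideanSpace ℝ (Fin m))
    (hw : ∀ i : Fin n, (i : ℕ) < G₀.rank →
      w i ∈ colSpace G₀ᵀ ∧ appMat G₀ (w i) = η i)
    (lam : Fin n → ℝ → ℝ)
    (hlam : ∀ (i : Fin n) (s : ℝ), lam i s =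
      if (i : ℕ) < G₀.rank then
        max (max (g s / (α s * ‖w i‖ + β s)) (g s)) 0
      else 0)
    (T : ℝ) (hT : 0 ≤ T)
    (φ φ' : ℝ → EuclideanSpace ℝ (Fin n)) (hφ0 : φ 0 = 0)
    (hstay : ∀ t ∈ Set.Icc (0 : ℝ) T, (Lf + LG) * ‖φ t‖ ≤ minSV G₀)
    (hderiv : ∀ t ∈ Set.Icc (0 : ℝ) T, HasDerivAt φ (φ' t) t)
    (q : ℝ → EuclideanSpace ℝ (Fin n))
    (hq : ∀ t ∈ Set.Icc (0 : ℝ) T, (∑ i, |q t i|) ≤ 1)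
    (hform : ∀ t ∈ Set.Icc (0 : ℝ) T, φ' t =
      f₀ + appMat U (appMat (Matrix.diagonal fun i => lam i ‖φ t‖) (q t))) :
    ∀ fh Gh, Consistent R Lf LG f₀ G₀ fh Gh →
      ∃ u : ℝ → EuclideanSpace ℝ (Fin m),
        ∀ t ∈ Set.Icc (0 : ℝ) T,
          ‖u t‖ ≤ 1 ∧ φ' t = fh (φ t) + appMat (Gh (φ t)) (u t) :=
  theorem4_polytope_trajectory_general R Lf LG hLf hLG f₀ hf₀ H₀ hH₀ G₀ hG₀fac hG₀ μ hμ g α β hg hα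
    hβ U hU η hη w hw lam hlam T φ φ' hstay q hq hform
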